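/- arXiv:1701.06076 — 2 statements merged into one kernel-verified Lean document; each statement's English description precedes it below -/
import Mathlib

section
/- Fix τ with Im τ > 0 and b = 2π/Im τ. Suppose ψ : ℂ → ℂ is continuous, satisfies ψ(-x) = ψ(x), and satisfies the quasi-periodicity relations ψ(y+1) = e^{i k n y₂ / 2} ψ(y) and ψ(y+τ) = e^{i k n (τ₁ y₂ - τ₂ y₁)/2} ψ(y) where y = y₁ + i y₂, τ = τ₁ + i τ₂, k τ₂ = 2π, and n is an odd integer. Then ψ(½(1+τ)) = 0. -/
/-!
At `z = -(1 + τ)/2` the two translates `z + τ = (τ - 1)/2` and `z + 1 = (1 - τ)/2` are opposite,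
so evenness makes the two quasi-periodicity relations give `e^{iπn/2} ψ(z) = e^{-iπn/2} ψ(z)`.
The two phases differ by the factor `e^{iπn} = -1` for odd `n`, hence `ψ(z) = 0`, and
`ψ((1 + τ)/2) = ψ(-z) = ψ(z)`.
-/

open Complex Real

theorem Complex.exp_int_mul_pi_mul_I_of_odd {n : ℤ} (hn : Odd n) : exp (n * (π * I)) = -1 := by
  rw [exp_int_mul, exp_pi_mul_I, hn.neg_one_zpow]

theorem Complex.exp_I_mul_pi_mul_div_two_ne_of_odd {n : ℤ} (hn : Odd n) :
    exp (I * ↑(π * n / 2)) ≠ exp (I * ↑(-(π * n / 2))) := by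
  have hflip : exp (I * ↑(π * n / 2)) = -exp (I * ↑(-(π * n / 2))) := by
    rw [← mul_neg_one, ← exp_int_mul_pi_mul_I_of_odd hn, ← exp_add]
    push_cast
    ring_nf
  intro h
  rw [h, self_eq_neg] at hflip
  exact exp_ne_zero _ hflip

theorem eq_zero_of_apply_eq_mul_of_apply_neg_eq_mul {G M : Type*} [Neg G] [MonoidWithZero M]
    [IsRightCancelMulZero M] {f : G → M} (heven : ∀ x, f (-x) = f x) {w z : G} {a b : M} (hw : f w = a * f z)
    (hnegw : f (-w) = b * f z) (hab : a ≠ b) : f z = 0 := by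
  by_contra hz
  exact hab (mul_right_cancel₀ hz (by rw [← hw, ← hnegw, heven]))

theorem psi_vanishes_at_half_one_plus_tau_general (τ : ℂ)
    (k : ℝ) (hk : k * τ.im = 2 * Real.pi)
    (n : ℤ) (hodd : Odd n)
    (ψ : ℂ → ℂ)
    (heven : ∀ x, ψ (-x) = ψ x)
    (h1 : ∀ y : ℂ, ψ (y + 1) = Complex.exp (Complex.I * ((k * n * y.im / 2 : ℝ) : ℂ)) * ψ y)
    (h2 : ∀ y : ℂ, ψ (y + τ) =
      Complex.exp (Complex.I * ((k * n * (τ.re * y.im - τ.im * y.re) / 2 : ℝ) : ℂ)) * ψ y) :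
    ψ ((1 + τ) / 2) = 0 := by
  set z : ℂ := -(1 + τ) / 2 with hz
  have hz_re : z.re = -(1 + τ.re) / 2 := by simp [hz]
  have hz_im : z.im = -τ.im / 2 := by simp [hz]
  have hshift_tau : ψ (z + τ) = exp (I * ↑(π * n / 2)) * ψ z := by
    rw [h2, hz_re, hz_im]
    congr 4
    linear_combination (n / 4 : ℝ) * hk
  have hshift_one : ψ (-(z + τ)) = exp (I * ↑(-(π * n / 2))) * ψ z := by
    rw [show -(z + τ) = z + 1 by rw [hz]; ring, h1, hz_im]
    congr 4
    linear_combination (-n / 4 : ℝ) * hk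
  have hψz : ψ z = 0 := eq_zero_of_apply_eq_mul_of_apply_neg_eq_mul heven hshift_tau hshift_one
    (exp_I_mul_pi_mul_div_two_ne_of_odd hodd)
  rw [show (1 + τ) / 2 = -z by rw [hz]; ring, heven, hψz]

theorem psi_vanishes_at_half_one_plus_tau (τ : ℂ) (hτ : 0 < τ.im)
    (k : ℝ) (hk : k * τ.im = 2 * Real.pi)
    (n : ℤ) (hodd : Odd n)
    (ψ : ℂ → ℂ) (hcont : Continuous ψ)
    (heven : ∀ x, ψ (-x) = ψ x)
    (h1 : ∀ y : ℂ, ψ (y + 1) = Complex.exp (Complex.I * ((k * n * y.im / 2 : ℝ) : ℂ)) * ψ y)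
    (h2 : ∀ y : ℂ, ψ (y + τ) =
      Complex.exp (Complex.I * ((k * n * (τ.re * y.im - τ.im * y.re) / 2 : ℝ) : ℂ)) * ψ y) :
    ψ ((1 + τ) / 2) = 0 :=
  psi_vanishes_at_half_one_plus_tau_general τ k hk n hodd ψ heven h1 h2
end

section
/- Let n be even. If ψ : ℝ² → ℂ satisfies ψ(x+t) = e^{i((n/2) x·Jt + c_t)} ψ(x) for all t ∈ ℒ, where ℒ = √(2π/Im τ)(ℤ + τℤ), J is rotation by π/2, and c_t = πnpq for t = √(2π/Im τ)(p+qτ), and if g ∈ SO(2) maps ℒ to itself, then ψ∘g also satisfies the same quasi-periodicity condition, i.e. ψ(g(x+t)) = e^{i((n/2) x·Jt + c_t)} ψ(gx). -/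
/-! For even `n` the phase `c_t = π n p q` lies in `2πℤ`, so the quasi-periodicity factor of `ψ`
at `t ∈ ℒ` is `exp (i (n/2) x·Jt)`, which no longer refers to the coordinates `p, q` of `t`.
Rotations preserve `x·Jt` and `g` maps `ℒ` onto itself, so the law at `g t` and `g x` gives
the law for `ψ ∘ g` at `t`. -/

open Complex Real

/-- Scaling factor r = √(2π/Im τ) of the normalized lattice, as a complex number. -/
noncomputable def rr (τ : ℂ) : ℂ := ((Real.sqrt (2 * Real.pi / τ.im) : ℝ) : ℂ)

/-- The normalized lattice ℒ = √(2π/Im τ)(ℤ + τℤ) ⊂ ℂ. -/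
noncomputable def latt (τ : ℂ) : Set ℂ := {w | ∃ p q : ℤ, w = rr τ * ((p : ℂ) + q * τ)}

/-- x · Jt where J is rotation by π/2 (i.e. multiplication by i). -/
noncomputable def dotJ (x t : ℂ) : ℝ :=
  x.re * (Complex.I * t).re + x.im * (Complex.I * t).im

lemma dotJ_mul_mul_of_norm_eq_one {g : ℂ} (hg : ‖g‖ = 1) (x t : ℂ) :
    dotJ (g * x) (g * t) = dotJ x t := by
  have hg2 : g.re ^ 2 + g.im ^ 2 = 1 := by
    have h := Complex.sq_norm g
    rw [hg, Complex.normSq_apply] at h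
    linear_combination -h
  simp only [dotJ, Complex.mul_re, Complex.mul_im, Complex.I_re, Complex.I_im]
  linear_combination (x.im * t.re - x.re * t.im) * hg2

lemma exp_I_mul_add_pi_mul_of_even {n : ℕ} (hn : Even n) (p q : ℤ) (A : ℝ) :
    Complex.exp (Complex.I * ((A + Real.pi * n * p * q : ℝ) : ℂ)) =
      Complex.exp (Complex.I * (A : ℂ)) := by
  obtain ⟨m, rfl⟩ := hn
  have hsplit : Complex.I * ((A + Real.pi * ↑(m + m) * p * q : ℝ) : ℂ) =
      Complex.I * (A : ℂ) + ((m * p * q : ℤ) : ℂ) * (2 * Real.pi * Complex.I) := by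
    push_cast
    ring
  rw [hsplit, Complex.exp_add, Complex.exp_int_mul_two_pi_mul_I, mul_one]

lemma quasiperiodic_of_mem_latt {n : ℕ} (hn : Even n) {τ : ℂ} {ψ : ℂ → ℂ}
    (hψ : ∀ (p q : ℤ) (x : ℂ),
      ψ (x + rr τ * ((p : ℂ) + q * τ)) =
        Complex.exp (Complex.I *
          ((((n : ℝ) / 2) * dotJ x (rr τ * ((p : ℂ) + q * τ)) + Real.pi * n * p * q : ℝ) : ℂ)) *
          ψ x)
    {t : ℂ} (ht : t ∈ latt τ) (x : ℂ) :
    ψ (x + t) = Complex.exp (Complex.I * ((((n : ℝ) / 2) * dotJ x t : ℝ) : ℂ)) * ψ x := by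
  obtain ⟨p, q, rfl⟩ := ht
  rw [hψ, exp_I_mul_add_pi_mul_of_even hn]

theorem quasiperiodicity_rotation_invariant_general (n : ℕ) (hn : Even n)
    (τ : ℂ)
    (g : ℂ) (hg : ‖g‖ = 1)
    (hgL : (fun w => g * w) '' latt τ = latt τ)
    (ψ : ℂ → ℂ)
    (hψ : ∀ (p q : ℤ) (x : ℂ),
      ψ (x + rr τ * ((p : ℂ) + q * τ)) =
        Complex.exp (Complex.I *
          ((((n : ℝ) / 2) * dotJ x (rr τ * ((p : ℂ) + q * τ)) + Real.pi * n * p * q : ℝ) : ℂ)) *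
          ψ x) :
    ∀ (p q : ℤ) (x : ℂ),
      ψ (g * (x + rr τ * ((p : ℂ) + q * τ))) =
        Complex.exp (Complex.I *
          ((((n : ℝ) / 2) * dotJ x (rr τ * ((p : ℂ) + q * τ)) + Real.pi * n * p * q : ℝ) : ℂ)) *
          ψ (g * x) := by
  intro p q x
  set t := rr τ * ((p : ℂ) + q * τ)
  have hgt : g * t ∈ latt τ := hgL ▸ Set.mem_image_of_mem _ ⟨p, q, rfl⟩
  rw [mul_add, quasiperiodic_of_mem_latt hn hψ hgt, dotJ_mul_mul_of_norm_eq_one hg,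
    exp_I_mul_add_pi_mul_of_even hn]

theorem quasiperiodicity_rotation_invariant (n : ℕ) (hn : Even n)
    (τ : ℂ) (hτ : 0 < τ.im)
    (g : ℂ) (hg : ‖g‖ = 1)
    (hgL : (fun w => g * w) '' latt τ = latt τ)
    (ψ : ℂ → ℂ)
    (hψ : ∀ (p q : ℤ) (x : ℂ),
      ψ (x + rr τ * ((p : ℂ) + q * τ)) =
        Complex.exp (Complex.I *
          ((((n : ℝ) / 2) * dotJ x (rr τ * ((p : ℂ) + q * τ)) + Real.pi * n * p * q : ℝ) : ℂ)) *
          ψ x) :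
    ∀ (p q : ℤ) (x : ℂ),
      ψ (g * (x + rr τ * ((p : ℂ) + q * τ))) =
        Complex.exp (Complex.I *
          ((((n : ℝ) / 2) * dotJ x (rr τ * ((p : ℂ) + q * τ)) + Real.pi * n * p * q : ℝ) : ℂ)) *
          ψ (g * x) :=
  quasiperiodicity_rotation_invariant_general n hn τ g hg hgL ψ hψ
end
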